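/- arXiv:2303.06208 — 2 statements merged into one kernel-verified Lean document; each statement's English description precedes it below -/
import Mathlib

section
/- Let n, l be natural numbers. The vectors e_P, indexed by the set partitions P of Fin l into at most n nonempty blocks, form a basis of the Σ_n-invariant subspace of the space of functions (Fin l → Fin n) → ℝ, where e_P is the indicator function of the set of tuples whose kernel partition equals P. -/
open scoped Classical

/-- The kernel partition `Π(i)` of a tuple `i : Fin l → Fin n`: the set partition of
`Fin l` into the nonempty fibers of `i`. -/
def kernelPartition {n l : ℕ} (i : Fin l → Fin n) : Set (Set (Fin l)) :=
  {S | S.Nonempty ∧ ∃ j : Fin n, S = i ⁻¹' {j}}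

/-- The `Σ_n`-invariant subspace of `(Fin l → Fin n) → ℝ ≅ (ℝ^n)^{⊗ l}`:
functions `f` with `f (σ ∘ i) = f i` for every permutation `σ` of `Fin n`. -/
def invariantFunctions (n l : ℕ) : Submodule ℝ ((Fin l → Fin n) → ℝ) where
  carrier := {f | ∀ (σ : Equiv.Perm (Fin n)) (i : Fin l → Fin n), f (σ ∘ i) = f i}
  add_mem' := by
    intro f g hf hg σ i
    simp only [Pi.add_apply, hf σ i, hg σ i]
  zero_mem' := by intro σ i; rfl
  smul_mem' := by
    intro c f hf σ i
    simp only [Pi.smul_apply, hf σ i]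

/-! The kernel partition of a tuple `i` is the set of classes of `Setoid.ker i`. Two tuples with
the same kernel differ by a permutation of `Fin n` (extend the bijection between their ranges),
and every partition into at most `n` blocks is a kernel partition. So the `Σ_n`-orbits of tuples
are exactly the fibers of `i ↦ Π(i)` onto the partitions with at most `n` blocks, the invariant
functions are the pullbacks of functions on that set, and the pullback of the standard basis
is `(e_P)_P`. -/

namespace Setoid

variable {α β : Type*}

theorem ker_injective_comp {γ : Type*} {g : β → γ} (hg : g.Injective) (f : α → β) :
    ker (g ∘ f) = ker f :=
  Setoid.ext fun _ _ => hg.eq_iff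

theorem ncard_classes (r : Setoid α) : r.classes.ncard = Nat.card (Quotient r) := by
  rw [← Nat.card_coe_set_eq, Nat.card_congr (quotientEquivClasses r)]

theorem exists_ker_eq [Finite α] [Finite β] (r : Setoid α)
    (h : Nat.card (Quotient r) ≤ Nat.card β) : ∃ f : α → β, ker f = r := by
  have := Fintype.ofFinite (Quotient r)
  have := Fintype.ofFinite β
  rw [Nat.card_eq_fintype_card, Nat.card_eq_fintype_card] at h
  obtain ⟨e⟩ := Function.Embedding.nonempty_of_card_le h
  exact ⟨e ∘ Quotient.mk'', (ker_injective_comp e.injective _).trans (ker_mk_eq r)⟩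

theorem exists_perm_comp_eq_of_ker_eq [Finite α] {f g : α → β} (h : ker f = ker g) :
    ∃ σ : Equiv.Perm β, σ ∘ f = g := by
  obtain ⟨σ, hσ⟩ := Equiv.Perm.exists_extending_pair (kerLift f) (Quotient.lift g h.le)
    (kerLift_injective f) ((lift_injective_iff_ker_eq_of_le h.le).2 h.symm)
  exact ⟨σ, funext fun a => hσ ⟦a⟧⟩

end Setoid

namespace LinearMap

variable (R : Type*) {X I : Type*} [Semiring R] [Finite I]

noncomputable def funLeftRangeBasis (κ : X → I) (hκ : κ.Surjective) :
    Module.Basis I R (range (funLeft R R κ)) :=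
  (Pi.basisFun R I).map (LinearEquiv.ofInjective _ (funLeft_injective_of_surjective _ _ κ hκ))

theorem coe_funLeftRangeBasis_apply [DecidableEq I] (κ : X → I) (hκ : κ.Surjective) (i : I) :
    (funLeftRangeBasis R κ hκ i : X → R) = fun x => if κ x = i then 1 else 0 := by
  ext x
  simp [funLeftRangeBasis, Pi.single_apply]

end LinearMap

section
variable {n l : ℕ}

theorem kernelPartition_eq_classes_ker (i : Fin l → Fin n) :
    kernelPartition i = (Setoid.ker i).classes := by
  ext S
  constructor
  · rintro ⟨⟨a, ha⟩, j, rfl⟩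
    refine ⟨a, ?_⟩
    ext b
    simp_all [Setoid.ker_def]
  · rintro ⟨a, rfl⟩
    exact ⟨⟨a, rfl⟩, i a, rfl⟩

theorem kernelPartition_eq_iff {i i' : Fin l → Fin n} :
    kernelPartition i = kernelPartition i' ↔ Setoid.ker i = Setoid.ker i' := by
  rw [kernelPartition_eq_classes_ker, kernelPartition_eq_classes_ker, Setoid.classes_inj]

theorem kernelPartition_perm_comp (σ : Equiv.Perm (Fin n)) (i : Fin l → Fin n) :
    kernelPartition (σ ∘ i) = kernelPartition i :=
  kernelPartition_eq_iff.2 (Setoid.ker_injective_comp σ.injective i)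

theorem isPartition_kernelPartition (i : Fin l → Fin n) :
    Setoid.IsPartition (kernelPartition i) :=
  kernelPartition_eq_classes_ker i ▸ Setoid.isPartition_classes _

theorem ncard_kernelPartition_le (i : Fin l → Fin n) : (kernelPartition i).ncard ≤ n := by
  rw [kernelPartition_eq_classes_ker, Setoid.ncard_classes,
    Nat.card_congr (Setoid.quotientKerEquivRange i)]
  exact (Finite.card_subtype_le _).trans_eq (Nat.card_fin n)

theorem exists_kernelPartition_eq {P : Set (Set (Fin l))} (hP : Setoid.IsPartition P)
    (hn : P.ncard ≤ n) : ∃ i : Fin l → Fin n, kernelPartition i = P := by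
  set r := Setoid.mkClasses P hP.2
  have hr : r.classes = P := Setoid.classes_mkClasses P hP
  obtain ⟨i, hi⟩ := Setoid.exists_ker_eq (β := Fin n) r (by
    rwa [← Setoid.ncard_classes, hr, Nat.card_fin])
  exact ⟨i, by rw [kernelPartition_eq_classes_ker, hi, hr]⟩

end

abbrev BoundedPartition (n l : ℕ) :=
  {P : Set (Set (Fin l)) // Setoid.IsPartition P ∧ P.ncard ≤ n}

def BoundedPartition.kernel {n l : ℕ} (i : Fin l → Fin n) : BoundedPartition n l :=
  ⟨kernelPartition i, isPartition_kernelPartition i, ncard_kernelPartition_le i⟩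

theorem BoundedPartition.kernel_surjective (n l : ℕ) :
    (BoundedPartition.kernel : (Fin l → Fin n) → BoundedPartition n l).Surjective :=
  fun P => (exists_kernelPartition_eq P.2.1 P.2.2).imp fun _ hi => Subtype.ext hi

theorem invariantFunctions_eq_range_funLeft (n l : ℕ) :
    invariantFunctions n l =
      LinearMap.range (LinearMap.funLeft ℝ ℝ (BoundedPartition.kernel (n := n) (l := l))) := by
  ext f
  constructor
  · intro hf
    refine ⟨f ∘ Function.surjInv (BoundedPartition.kernel_surjective n l), funext fun i => ?_⟩
    have hker := congrArg Subtype.val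
      (Function.surjInv_eq (BoundedPartition.kernel_surjective n l) (BoundedPartition.kernel i))
    obtain ⟨σ, hσ⟩ := Setoid.exists_perm_comp_eq_of_ker_eq (kernelPartition_eq_iff.1 hker)
    exact ((congrArg f hσ).symm.trans (hf σ _)).symm
  · rintro ⟨g, rfl⟩ σ i
    simp [BoundedPartition.kernel, kernelPartition_perm_comp]

/-- The orbit-sum vectors `e_P`, indexed by set partitions `P` of `Fin l` into at most
`n` nonempty blocks (where `e_P` is the indicator of the tuples with kernel partition `P`),
form a basis of the `Σ_n`-invariant subspace. -/
theorem orbit_sum_basis (n l : ℕ) :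
    ∃ b : Module.Basis {P : Set (Set (Fin l)) // Setoid.IsPartition P ∧ P.ncard ≤ n} ℝ
        (invariantFunctions n l),
      ∀ P, (↑(b P) : (Fin l → Fin n) → ℝ) =
        fun i => if kernelPartition i = P.1 then 1 else 0 := by
  refine ⟨(LinearMap.funLeftRangeBasis ℝ _ (BoundedPartition.kernel_surjective n l)).map
    (LinearEquiv.ofEq _ _ (invariantFunctions_eq_range_funLeft n l).symm), fun P => ?_⟩
  simp [LinearMap.coe_funLeftRangeBasis_apply, BoundedPartition.kernel, Subtype.ext_iff]
end

section
/- Let n, m, m' be natural numbers. The vector space of Σ_n-equivariant linear maps from the space of functions (Fin m → Fin n) → ℝ to the space of functions (Fin m' → Fin n) → ℝ (with Σ_n acting on each space by permuting the values of the indexing tuples) is linearly isomorphic to the Σ_n-invariant subspace of the space of functions (Fin (m + m') → Fin n) → ℝ. -/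
/-- The space of `Σ_n`-equivariant linear maps
`((Fin m → Fin n) → ℝ) → ((Fin m' → Fin n) → ℝ)`, where `Σ_n` acts on each space by
`(σ • v) i = v (⇑σ⁻¹ ∘ i)`. -/
noncomputable def equivariantMaps (n m m' : ℕ) :
    Submodule ℝ (((Fin m → Fin n) → ℝ) →ₗ[ℝ] ((Fin m' → Fin n) → ℝ)) where
  carrier := {φ | ∀ (σ : Equiv.Perm (Fin n)) (v : (Fin m → Fin n) → ℝ),
    φ (fun i => v (⇑σ⁻¹ ∘ i)) = fun i => φ v (⇑σ⁻¹ ∘ i)}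
  add_mem' := by
    intro φ ψ hφ hψ σ v
    funext i
    simp only [LinearMap.add_apply, Pi.add_apply, hφ σ v, hψ σ v]
  zero_mem' := by intro σ v; rfl
  smul_mem' := by
    intro c φ hφ σ v
    funext i
    simp only [LinearMap.smul_apply, Pi.smul_apply, hφ σ v]

/-! A linear map `φ : (A → ℝ) → (B → ℝ)` between function spaces on finite sets is
determined by its matrix `M b a = φ (δ_a) b`, and `φ` commutes with the action of a group
permuting `A` and `B` iff `M` is invariant under the diagonal action. For `A = Fin m → Fin n`
and `B = Fin m' → Fin n`, concatenation of tuples identifies `A × B` with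
`Fin (m + m') → Fin n` compatibly with `Σ_n`, so invariant matrices are exactly invariant
functions on `(m + m')`-tuples. -/

theorem LinearMap.equivariant_iff_toMatrix'_smul_smul {G α β R : Type*} [Group G]
    [MulAction G α] [MulAction G β] [CommSemiring R] [Fintype α] [DecidableEq α]
    (φ : (α → R) →ₗ[R] β → R) :
    (∀ (g : G) (v : α → R), φ (fun a => v (g⁻¹ • a)) = fun b => φ v (g⁻¹ • b)) ↔
      ∀ (g : G) (a : α) (b : β), toMatrix' φ (g • b) (g • a) = toMatrix' φ b a := by
  constructor
  · intro h g a b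
    have single_smul :
        (fun x => (Pi.single a 1 : α → R) (g⁻¹ • x)) = Pi.single (g • a) 1 := by
      funext x
      simp only [Pi.single_apply, inv_smul_eq_iff]
    rw [toMatrix'_apply, toMatrix'_apply, ← single_smul, h]
    simp only [inv_smul_smul]
  · intro h g v
    funext b
    calc φ (fun a => v (g⁻¹ • a)) b = ∑ a, toMatrix' φ b a * v (g⁻¹ • a) := by
          rw [← toMatrix'_mulVec]; rfl
      _ = ∑ a, toMatrix' φ b (g • a) * v a := by
          simpa using (Equiv.sum_comp (MulAction.toPerm g)
            fun a => toMatrix' φ b a * v (g⁻¹ • a)).symm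
      _ = ∑ a, toMatrix' φ (g⁻¹ • b) a * v a := by
          simp only [← h g⁻¹ _ b, inv_smul_smul]
      _ = φ v (g⁻¹ • b) := by
          rw [← toMatrix'_mulVec]; rfl

theorem mem_equivariantMaps_iff_toMatrix' {n m m' : ℕ}
    (φ : ((Fin m → Fin n) → ℝ) →ₗ[ℝ] (Fin m' → Fin n) → ℝ) :
    φ ∈ equivariantMaps n m m' ↔ ∀ (σ : Equiv.Perm (Fin n)) a b,
      LinearMap.toMatrix' φ (σ ∘ b) (σ ∘ a) = LinearMap.toMatrix' φ b a :=
  -- the pointwise action of `σ` on tuples is `σ • a = ⇑σ ∘ a` definitionally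
  LinearMap.equivariant_iff_toMatrix'_smul_smul φ

theorem Fin.comp_append {X Y : Type*} {m m' : ℕ} (f : X → Y) (a : Fin m → X)
    (b : Fin m' → X) :
    f ∘ Fin.append a b = Fin.append (f ∘ a) (f ∘ b) := by
  funext i
  induction i using Fin.addCases <;> simp

theorem Fin.forall_iff_forall_append {X : Type*} {m m' : ℕ}
    {P : (Fin (m + m') → X) → Prop} :
    (∀ c, P c) ↔ ∀ a b, P (Fin.append a b) :=
  ⟨fun h _ _ => h _, fun h c => Fin.append_castAdd_natAdd (f := c) ▸ h _ _⟩

noncomputable def LinearMap.toAppendFun (R X : Type*) [CommSemiring R] [Fintype X]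
    [DecidableEq X] (m m' : ℕ) :
    (((Fin m → X) → R) →ₗ[R] (Fin m' → X) → R) ≃ₗ[R] (Fin (m + m') → X) → R :=
  LinearMap.toMatrix'.trans <| (LinearEquiv.curry R R _ _).symm.trans <|
    LinearEquiv.funCongrLeft R R <| (Fin.appendEquiv m m').symm.trans (Equiv.prodComm _ _)

@[simp]
theorem LinearMap.toAppendFun_apply_append {R X : Type*} [CommSemiring R] [Fintype X]
    [DecidableEq X] {m m' : ℕ} (φ : ((Fin m → X) → R) →ₗ[R] (Fin m' → X) → R)
    (a : Fin m → X) (b : Fin m' → X) :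
    LinearMap.toAppendFun R X m m' φ (Fin.append a b) = LinearMap.toMatrix' φ b a := by
  have split_append : (Fin.appendEquiv m m').symm (Fin.append a b) = (a, b) :=
    (Fin.appendEquiv m m').symm_apply_apply (a, b)
  change LinearMap.toMatrix' φ ((Fin.appendEquiv m m').symm (Fin.append a b)).2
    ((Fin.appendEquiv m m').symm (Fin.append a b)).1 = _
  rw [split_append]

theorem equivariantMaps_map_toAppendFun (n m m' : ℕ) :
    (equivariantMaps n m m').map (LinearMap.toAppendFun ℝ (Fin n) m m' : _ →ₗ[ℝ] _) =
      invariantFunctions n (m + m') := by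
  ext f
  obtain ⟨φ, rfl⟩ := (LinearMap.toAppendFun ℝ (Fin n) m m').surjective f
  rw [Submodule.mem_map_equiv, LinearEquiv.symm_apply_apply, mem_equivariantMaps_iff_toMatrix']
  change _ ↔ ∀ σ c, _
  simp only [Fin.forall_iff_forall_append, Fin.comp_append, LinearMap.toAppendFun_apply_append]

/-- Permutation equivariant linear layers `(ℝ^n)^{⊗ m} → (ℝ^n)^{⊗ m'}` are linearly
isomorphic to the `Σ_n`-invariant subspace of `(ℝ^n)^{⊗ (m + m')}`. -/
theorem equivariantMaps_linearEquiv_invariants (n m m' : ℕ) :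
    Nonempty ((equivariantMaps n m m') ≃ₗ[ℝ] (invariantFunctions n (m + m'))) :=
  ⟨(LinearMap.toAppendFun ℝ (Fin n) m m').ofSubmodules _ _
    (equivariantMaps_map_toAppendFun n m m')⟩
end
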